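/- Consider stochastic gradient descent on the parameters of a ReLU network with architecture a = (a_0,...,a_D): Θ_t = Θ_{t-1} - γ_t G_t(Θ_{t-1}), where G_t agrees with the partial derivatives of the loss L_t(θ) = F_t(𝔠 ∘ N_a^θ) wherever those partial derivatives exist. If the initialization Θ_0 lies in the inactive set I_a^j (all weights and biases of hidden layer j, 1 < j < D, strictly negative), then Θ_t ∈ I_a^j for every t ≥ 0. -/

import Mathlib

open MeasureTheory ProbabilityTheory

noncomputable section

/-- `layerSum a j = ∑_{i=1}^{j} a_i (a_{i-1}+1)`, the number of parameters in layers `1,…,j`. -/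
def layerSum (a : ℕ → ℕ) (j : ℕ) : ℕ := ∑ i ∈ Finset.Icc 1 j, a i * (a (i - 1) + 1)

/-- The affine map of a layer with `m` outputs, `n` inputs, parameters read from `θ`
starting at offset `k` (weights row-wise, then biases). -/
def affApply (m n : ℕ) (θ : ℕ → ℝ) (k : ℕ) (y : Fin n → ℝ) : Fin m → ℝ :=
  fun i => (∑ l : Fin n, θ (k + i.val * n + l.val) * y l) + θ (k + m * n + i.val)

/-- Forward pass through the first `j` layers of the network, with componentwise ReLU
applied after each affine layer. -/
def fwd (a : ℕ → ℕ) (θ : ℕ → ℝ) (x : Fin (a 0) → ℝ) : (j : ℕ) → Fin (a j) → ℝ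
  | 0 => x
  | j + 1 => fun i => max (affApply (a (j + 1)) (a j) θ (layerSum a j) (fwd a θ x j) i) 0

/-- The realization `N_a^θ : ℝ^{a 0} → ℝ^{a D}` of the fully connected feedforward ReLU
network with architecture `a = (a 0, …, a D)` and parameters `θ`:
ReLU after each of the hidden layers `1,…,D-1`, linear read-out layer `D`. -/
def realization (a : ℕ → ℕ) (D : ℕ) (θ : ℕ → ℝ) (x : Fin (a 0) → ℝ) : Fin (a D) → ℝ :=
  affApply (a D) (a (D - 1)) θ (layerSum a (D - 1)) (fwd a θ x (D - 1))

/-- All weights and biases of layer `j` (the parameter block with indices in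
`[layerSum a (j-1), layerSum a j)`) are strictly negative. -/
def layerNeg (a : ℕ → ℕ) (j : ℕ) (θ : ℕ → ℝ) : Prop :=
  ∀ i, layerSum a (j - 1) ≤ i → i < layerSum a j → θ i < 0

/-- The inactive set `I_a`: some hidden layer `j` with `1 < j < D` has all its weights and
biases strictly negative. -/
def Inactive (a : ℕ → ℕ) (D : ℕ) (θ : ℕ → ℝ) : Prop :=
  ∃ j, 1 < j ∧ j < D ∧ layerNeg a j θ

end

/-!
Once all weights and biases of a hidden layer `j ≥ 2` are negative, that layer receives the
nonnegative outputs of a ReLU layer and so outputs zero for every input; the realization then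
depends only on the parameters above layer `j`. Hence moving a single layer-`j` parameter
within `(-∞, 0)` leaves the loss unchanged, so its partial derivative exists and vanishes, the
gradient step does not move it, and negativity of layer `j` is preserved by induction.
-/

open Topology

lemma layerSum_succ (a : ℕ → ℕ) (p : ℕ) :
    layerSum a (p + 1) = layerSum a p + a (p + 1) * (a p + 1) := by
  rw [layerSum, Finset.sum_Icc_succ_top (by omega)]
  simp [layerSum]

lemma layerSum_mono (a : ℕ → ℕ) : Monotone (layerSum a) := fun _ _ h =>
  Finset.sum_le_sum_of_subset (Finset.Icc_subset_Icc_right h)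

lemma affApply_congr {m n : ℕ} {θ θ' : ℕ → ℝ} {k : ℕ} (y : Fin n → ℝ)
    (h : ∀ k', k ≤ k' → θ k' = θ' k') : affApply m n θ k y = affApply m n θ' k y := by
  funext i
  simp only [affApply, h _ (Nat.le_add_right _ _), Nat.add_assoc]

lemma affApply_neg {m n : ℕ} {θ : ℕ → ℝ} {k : ℕ} {y : Fin n → ℝ}
    (hθ : ∀ r < m * (n + 1), θ (k + r) < 0) (hy : 0 ≤ y) (i : Fin m) :
    affApply m n θ k y i < 0 := by
  have hi := i.isLt
  refine add_neg_of_nonpos_of_neg (Finset.sum_nonpos fun l _ => ?_) ?_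
  · have hl := l.isLt
    refine mul_nonpos_of_nonpos_of_nonneg (le_of_lt ?_) (hy l)
    rw [Nat.add_assoc]
    exact hθ _ (by nlinarith)
  · rw [Nat.add_assoc]
    exact hθ _ (by nlinarith)

lemma fwd_succ_nonneg (a : ℕ → ℕ) (θ : ℕ → ℝ) (x : Fin (a 0) → ℝ) (p : ℕ) :
    0 ≤ fwd a θ x (p + 1) := fun _ => le_max_right _ _

lemma fwd_eq_zero_of_layerNeg {a : ℕ → ℕ} {θ : ℕ → ℝ} (x : Fin (a 0) → ℝ) {j : ℕ}
    (hj : 1 < j) (hθ : layerNeg a j θ) : fwd a θ x j = 0 := by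
  obtain ⟨q, rfl⟩ : ∃ q, j = q + 2 := ⟨j - 2, by omega⟩
  funext i
  refine max_eq_right (affApply_neg (fun r hr => hθ _ ?_ ?_) (fwd_succ_nonneg a θ x q) i).le
  · exact Nat.le_add_right _ _
  · exact (Nat.add_lt_add_left hr _).trans_eq (layerSum_succ a (q + 1)).symm

lemma fwd_congr {a : ℕ → ℕ} {θ θ' : ℕ → ℝ} {x : Fin (a 0) → ℝ} {p : ℕ}
    (hp : fwd a θ x p = fwd a θ' x p) (h : ∀ k, layerSum a p ≤ k → θ k = θ' k) :
    ∀ q, p ≤ q → fwd a θ x q = fwd a θ' x q := by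
  refine Nat.le_induction hp fun q hpq ih => ?_
  funext i
  simp only [fwd, ih, affApply_congr (fwd a θ' x q)
    fun k hk => h k ((layerSum_mono a hpq).trans hk)]

lemma realization_congr_of_layerNeg {a : ℕ → ℕ} {D j : ℕ} (hj1 : 1 < j) (hjD : j < D)
    {θ θ' : ℕ → ℝ} (hθ : layerNeg a j θ) (hθ' : layerNeg a j θ')
    (h : ∀ k, layerSum a j ≤ k → θ k = θ' k) :
    realization a D θ = realization a D θ' := by
  funext x
  have hj : fwd a θ x j = fwd a θ' x j := by
    rw [fwd_eq_zero_of_layerNeg x hj1 hθ, fwd_eq_zero_of_layerNeg x hj1 hθ']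
  rw [realization, realization, fwd_congr hj h (D - 1) (by omega)]
  exact affApply_congr _ fun k hk => h k ((layerSum_mono a (by omega)).trans hk)

lemma layerNeg_update {a : ℕ → ℕ} {j : ℕ} {θ : ℕ → ℝ} (hθ : layerNeg a j θ) (i : ℕ)
    {s : ℝ} (hs : s < 0) : layerNeg a j (Function.update θ i s) := by
  intro k hk₁ hk₂
  rcases eq_or_ne k i with rfl | hki
  · simpa using hs
  · simpa [Function.update_of_ne hki] using hθ k hk₁ hk₂

lemma realization_update_of_layerNeg {a : ℕ → ℕ} {D j : ℕ} (hj1 : 1 < j) (hjD : j < D)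
    {θ : ℕ → ℝ} (hθ : layerNeg a j θ) {i : ℕ} (hi : i < layerSum a j) {s : ℝ} (hs : s < 0) :
    realization a D (Function.update θ i s) = realization a D θ :=
  realization_congr_of_layerNeg hj1 hjD (layerNeg_update hθ i hs) hθ fun k hk =>
    Function.update_of_ne (by omega) _ _

/-- SGD cannot escape the inactive set: if the initialization `Θ 0` has all weights and
biases of hidden layer `j` (with `1 < j < D`) strictly negative, then so does every
gradient descent iterate `Θ t`. -/
theorem stmt7 (a : ℕ → ℕ) (D : ℕ)
    (haD : a D = 1) (𝔠 : ℝ → ℝ)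
    (F : ℕ → ((Fin (a 0) → ℝ) → ℝ) → ℝ)
    (L : ℕ → (ℕ → ℝ) → ℝ)
    (hL : ∀ t θ, L t θ = F t (fun x => 𝔠 (realization a D θ x ⟨0, by omega⟩)))
    (G : ℕ → (ℕ → ℝ) → ℕ → ℝ)
    (hG : ∀ t (θ : ℕ → ℝ) (i : ℕ),
      DifferentiableAt ℝ (fun s => L t (Function.update θ i s)) (θ i) →
      G t θ i = deriv (fun s => L t (Function.update θ i s)) (θ i))
    (γ : ℕ → ℝ) (Θ : ℕ → ℕ → ℝ)
    (hΘ : ∀ t i, Θ (t + 1) i = Θ t i - γ (t + 1) * G (t + 1) (Θ t) i)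
    (j : ℕ) (hj1 : 1 < j) (hjD : j < D) (h0 : layerNeg a j (Θ 0)) :
    ∀ t, layerNeg a j (Θ t) := by
  intro t
  induction t with
  | zero => exact h0
  | succ t ih =>
    intro i hlo hhi
    have hneg : Θ t i < 0 := ih i hlo hhi
    have hconst : (fun s => L (t + 1) (Function.update (Θ t) i s))
        =ᶠ[𝓝 (Θ t i)] fun _ => L (t + 1) (Θ t) := by
      filter_upwards [Iio_mem_nhds hneg] with s hs
      rw [hL, hL, realization_update_of_layerNeg hj1 hjD ih hhi hs]
    have hderiv := (hasDerivAt_const (Θ t i) (L (t + 1) (Θ t))).congr_of_eventuallyEq hconst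
    rw [hΘ, hG _ _ _ hderiv.differentiableAt, hderiv.deriv, mul_zero, sub_zero]
    exact hneg
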